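/- arXiv:2010.11544 — 2 statements merged into one kernel-verified Lean document; each statement's English description precedes it below -/
import Mathlib

section
/- Let S be a self-adjoint operator on a finite-dimensional Hilbert space with eigenpairs (λ_i, u_i), and let p be a polynomial satisfying the Lipschitz-integral condition |λ p'(λ)| ≤ L₁ for all λ in the spectrum of S and of (1+ε)S for |ε| small. Then for the relative perturbation S̃ = (1+ε)S with ε > 0, ‖p((1+ε)S) − p(S)‖ ≤ L₁ ε + O(ε²). -/
set_option maxHeartbeats 1000000
set_option synthInstance.maxHeartbeats 400000

open Polynomial

-- elementary inequality
lemma stmt4_aux_pow (ε : ℝ) (hε0 : 0 ≤ ε) (hε1 : ε ≤ 1) (i : ℕ) :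
    |(1 + ε) ^ i - 1 - i * ε| ≤ ε ^ 2 * (i * 2 ^ i) := by
  induction i with
  | zero => simp
  | succ i ih =>
    have h2 : (0:ℝ) ≤ ε ^ 2 * (i * 2 ^ i) := by positivity
    have habs := abs_le.mp ih
    have hpow : (i:ℝ) ≤ 2 ^ (i+1) := by
      have := Nat.lt_two_pow_self (n := i)
      have h' : (i:ℝ) ≤ 2 ^ i := by exact_mod_cast this.le
      have h'' : (2:ℝ) ^ i ≤ 2 ^ (i+1) := by
        rw [pow_succ]; nlinarith [pow_pos (by norm_num : (0:ℝ) < 2) i]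
      linarith
    have key : (1 + ε) ^ (i+1) - 1 - (i+1) * ε
        = (1 + ε) * ((1 + ε) ^ i - 1 - i * ε) + i * ε ^ 2 := by ring
    push_cast
    rw [key]
    have h1ε : (0:ℝ) ≤ 1 + ε := by linarith
    rw [abs_le]
    have hm := habs.1
    have hM := habs.2
    have e1 : (0:ℝ) ≤ (1 + ε) * (ε ^ 2 * (↑i * 2 ^ i) - ((1 + ε) ^ i - 1 - ↑i * ε)) :=
      mul_nonneg h1ε (by linarith)
    have e2 : (0:ℝ) ≤ (1 + ε) * (ε ^ 2 * (↑i * 2 ^ i) + ((1 + ε) ^ i - 1 - ↑i * ε)) :=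
      mul_nonneg h1ε (by linarith)
    have e3 : ε ^ 2 * (i:ℝ) ≤ ε ^ 2 * 2 ^ (i+1) :=
      mul_le_mul_of_nonneg_left hpow (sq_nonneg ε)
    have e4 : (0:ℝ) ≤ ↑i * ε ^ 2 := mul_nonneg (Nat.cast_nonneg i) (sq_nonneg ε)
    have f1 : (1 + ε) * ((1 + ε) ^ i - 1 - ↑i * ε) ≤ 2 * (ε ^ 2 * (↑i * 2 ^ i)) :=
      le_trans (mul_le_mul_of_nonneg_left hM h1ε)
        (mul_le_mul_of_nonneg_right (by linarith) h2)
    have f2 : -(2 * (ε ^ 2 * (↑i * 2 ^ i))) ≤ (1 + ε) * ((1 + ε) ^ i - 1 - ↑i * ε) := by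
      have := mul_le_mul_of_nonneg_left hm h1ε
      have := mul_le_mul_of_nonneg_right (show (1+ε) ≤ 2 by linarith) h2
      nlinarith
    have f3 : (i:ℝ) * ε ^ 2 ≤ ε ^ 2 * (2 * 2 ^ i) := by
      have : ε ^ 2 * (i:ℝ) ≤ ε ^ 2 * (2 * 2 ^ i) := by
        rw [show (2:ℝ) * 2 ^ i = 2 ^ (i+1) by rw [pow_succ]; ring]; exact e3
      linarith
    have heq : ε ^ 2 * ((↑i + 1) * 2 ^ (i+1))
        = 2 * (ε ^ 2 * (↑i * 2 ^ i)) + ε ^ 2 * (2 * 2 ^ i) := by rw [pow_succ]; ring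
    constructor <;> linarith

lemma stmt4_aux_sa {M : Type*} [NormedAddCommGroup M] [InnerProductSpace ℂ M]
    [CompleteSpace M] (S : M →L[ℂ] M) (hS : IsSelfAdjoint S) (r : ℝ[X]) :
    IsSelfAdjoint (Polynomial.aeval S (r.map (algebraMap ℝ ℂ)) : M →L[ℂ] M) := by
  induction r using Polynomial.induction_on' with
  | add p q hp hq => simpa [Polynomial.map_add] using hp.add hq
  | monomial n a =>
    rw [Polynomial.map_monomial, Polynomial.aeval_monomial]
    rw [IsSelfAdjoint, star_mul, star_pow, hS.star_eq]
    rw [← algebraMap_star_comm]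
    simp [Algebra.commutes, Complex.conj_ofReal]

lemma stmt4_aux_norm {M : Type*} [NormedAddCommGroup M] [InnerProductSpace ℂ M]
    [FiniteDimensional ℂ M] (S : M →L[ℂ] M) (hS : IsSelfAdjoint S) (r : ℝ[X]) (L : ℝ)
    (hL : 0 ≤ L) (h : ∀ x : ℝ, |x| ≤ ‖S‖ → |r.eval x| ≤ L) :
    ‖(Polynomial.aeval S (r.map (algebraMap ℝ ℂ)) : M →L[ℂ] M)‖ ≤ L := by
  set T : M →L[ℂ] M := Polynomial.aeval S (r.map (algebraMap ℝ ℂ)) with hTdef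
  have hT : IsSelfAdjoint T := stmt4_aux_sa S hS r
  have key : ∀ z ∈ spectrum ℂ T, ‖z‖ ≤ L := by
    rcases subsingleton_or_nontrivial M with hM | hM
    · intro z hz
      have hsub : Subsingleton (M →L[ℂ] M) := inferInstance
      rw [spectrum.mem_iff] at hz
      exact absurd (isUnit_of_subsingleton _) hz
    · intro z hz
      haveI : Nontrivial (M →L[ℂ] M) := inferInstance
      rw [hTdef, spectrum.map_polynomial_aeval_of_nonempty S _ (spectrum.nonempty S)] at hz
      obtain ⟨w, hw, rfl⟩ := hz
      have hwre := hS.mem_spectrum_eq_re hw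
      have hnorm : ‖w‖ ≤ ‖S‖ := spectrum.norm_le_norm_of_mem hw
      rw [hwre] at hw hnorm ⊢
      rw [Complex.norm_real] at hnorm
      have heval : Polynomial.eval ((w.re : ℝ) : ℂ) (r.map (algebraMap ℝ ℂ))
          = algebraMap ℝ ℂ (r.eval w.re) := by
        rw [Polynomial.eval_map,
          show ((w.re : ℝ) : ℂ) = algebraMap ℝ ℂ w.re from rfl, Polynomial.eval₂_hom]
      show ‖Polynomial.eval ((w.re : ℝ) : ℂ) (r.map (algebraMap ℝ ℂ))‖ ≤ L
      rw [heval]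
      simpa [Complex.norm_real] using h w.re hnorm
  have h1 : spectralRadius ℂ T ≤ ENNReal.ofReal L := by
    refine iSup₂_le fun z hz => ?_
    rw [← enorm_eq_nnnorm, ← ofReal_norm]
    exact ENNReal.ofReal_le_ofReal (key z hz)
  rw [hT.spectralRadius_eq_nnnorm, ← enorm_eq_nnnorm, ← ofReal_norm] at h1
  exact (ENNReal.ofReal_le_ofReal_iff hL).mp h1

/-- For a self-adjoint `S` on a finite-dimensional complex Hilbert space and
a polynomial `p` satisfying the Lipschitz-integral condition `|λ p'(λ)| ≤ L₁` on an interval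
containing the spectra of `S` and `(1+ε)S` for small `ε`, the relative perturbation
`S̃ = (1+ε)S` satisfies `‖p((1+ε)S) − p(S)‖ ≤ L₁ ε + C ε²` for all `0 < ε < ε₀`. -/
theorem stmt4 {M : Type*} [NormedAddCommGroup M] [InnerProductSpace ℂ M]
    [FiniteDimensional ℂ M] (S : M →L[ℂ] M) (hS : IsSelfAdjoint S)
    (p : Polynomial ℝ) (L₁ : ℝ)
    (hInt : ∀ x : ℝ, |x| ≤ 2 * ‖S‖ → |x * (Polynomial.derivative p).eval x| ≤ L₁) :
    ∃ C ε₀ : ℝ, 0 < C ∧ 0 < ε₀ ∧ ∀ ε : ℝ, 0 < ε → ε < ε₀ →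
      ‖(Polynomial.aeval (((1 + ε : ℝ) : ℂ) • S) (p.map (algebraMap ℝ ℂ)) : M →L[ℂ] M)
          - Polynomial.aeval S (p.map (algebraMap ℝ ℂ))‖ ≤ L₁ * ε + C * ε ^ 2 := by
  classical
  set q : ℂ[X] := p.map (algebraMap ℝ ℂ) with hq
  set n : ℕ := p.natDegree + 1 with hn
  set r : ℝ[X] := X * derivative p with hr
  have hL₁ : 0 ≤ L₁ := by
    have h0 := hInt 0 (by simp)
    simpa using le_trans (abs_nonneg _) h0
  -- norm bound on T
  set T : M →L[ℂ] M := Polynomial.aeval S (r.map (algebraMap ℝ ℂ)) with hT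
  have hTnorm : ‖T‖ ≤ L₁ := by
    apply stmt4_aux_norm S hS r L₁ hL₁
    intro x hx
    have hx2 : |x| ≤ 2 * ‖S‖ := le_trans hx (by nlinarith [norm_nonneg S])
    simpa [hr] using hInt x hx2
  -- degree bounds
  have hqdeg : q.natDegree < n := by
    have h1 : q.natDegree ≤ p.natDegree := Polynomial.natDegree_map_le
    omega
  have hrdeg : (r.map (algebraMap ℝ ℂ)).natDegree < n := by
    have hmap : (r.map (algebraMap ℝ ℂ)).natDegree ≤ r.natDegree := Polynomial.natDegree_map_le
    rcases eq_or_ne (derivative p) 0 with h0 | h0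
    · have hrz : r = 0 := by rw [hr, h0, mul_zero]
      rw [hrz, Polynomial.map_zero, Polynomial.natDegree_zero]
      omega
    · have hp0 : p.natDegree ≠ 0 := fun h => h0 (by
        rw [Polynomial.eq_C_of_natDegree_eq_zero h]; simp)
      have hlt := Polynomial.natDegree_derivative_lt hp0
      have : r.natDegree = 1 + (derivative p).natDegree := by
        rw [hr, Polynomial.natDegree_mul Polynomial.X_ne_zero h0, Polynomial.natDegree_X]
      omega
  -- coefficients of r
  have hcoeff : ∀ i : ℕ, (r.map (algebraMap ℝ ℂ)).coeff i = (i : ℂ) * q.coeff i := by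
    intro i
    rw [Polynomial.coeff_map, hq, Polynomial.coeff_map]
    cases i with
    | zero => simp [hr]
    | succ k =>
      rw [hr, Polynomial.coeff_X_mul, Polynomial.coeff_derivative]
      push_cast
      ring
  set C₀ : ℝ := ∑ i ∈ Finset.range n, |p.coeff i| * (i * 2 ^ i) * ‖S‖ ^ i with hC₀
  have hC₀0 : 0 ≤ C₀ :=
    Finset.sum_nonneg fun i _ => by positivity
  refine ⟨C₀ + 1, 1, by positivity, one_pos, ?_⟩
  intro ε hε0 hε1
  set c : ℂ := ((1 + ε : ℝ) : ℂ) with hc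
  have hA : (Polynomial.aeval (c • S) q : M →L[ℂ] M)
      = ∑ i ∈ Finset.range n, q.coeff i • (c ^ i • S ^ i) := by
    rw [Polynomial.aeval_eq_sum_range' hqdeg]
    exact Finset.sum_congr rfl fun i _ => by rw [_root_.smul_pow]
  have hB : (Polynomial.aeval S q : M →L[ℂ] M)
      = ∑ i ∈ Finset.range n, q.coeff i • S ^ i :=
    Polynomial.aeval_eq_sum_range' hqdeg S
  have hTsum : T = ∑ i ∈ Finset.range n, ((i : ℂ) * q.coeff i) • S ^ i := by
    rw [hT, Polynomial.aeval_eq_sum_range' hrdeg]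
    exact Finset.sum_congr rfl fun i _ => by rw [hcoeff i]
  have hsplit : (Polynomial.aeval (c • S) q : M →L[ℂ] M) - Polynomial.aeval S q
      - ((ε : ℂ) • T)
      = ∑ i ∈ Finset.range n, ((q.coeff i * (c ^ i - 1 - (i : ℂ) * (ε : ℂ))) • S ^ i) := by
    rw [hA, hB, hTsum, Finset.smul_sum, ← Finset.sum_sub_distrib, ← Finset.sum_sub_distrib]
    refine Finset.sum_congr rfl fun i _ => ?_
    rw [smul_smul, smul_smul, ← sub_smul, ← sub_smul]
    congr 1
    ring
  have hterm : ∀ i ∈ Finset.range n,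
      ‖(q.coeff i * (c ^ i - 1 - (i : ℂ) * (ε : ℂ))) • (S ^ i : M →L[ℂ] M)‖
        ≤ (|p.coeff i| * (i * 2 ^ i) * ‖S‖ ^ i) * ε ^ 2 := by
    intro i _
    rcases Nat.eq_zero_or_pos i with hi | hi
    · subst hi
      simp
    rw [norm_smul (q.coeff i * (c ^ i - 1 - (i : ℂ) * (ε : ℂ))) (S ^ i : M →L[ℂ] M)]
    have h1 : ‖q.coeff i * (c ^ i - 1 - (i : ℂ) * (ε : ℂ))‖
        ≤ |p.coeff i| * (ε ^ 2 * (i * 2 ^ i)) := by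
      rw [norm_mul]
      have hcast : c ^ i - 1 - (i : ℂ) * (ε : ℂ)
          = (((1 + ε) ^ i - 1 - i * ε : ℝ) : ℂ) := by
        rw [hc]; push_cast; ring
      rw [hcast, Complex.norm_real, hq, Polynomial.coeff_map]
      have := stmt4_aux_pow ε hε0.le hε1.le i
      have hc2 : ‖algebraMap ℝ ℂ (p.coeff i)‖ = |p.coeff i| := Complex.norm_real _
      rw [hc2, Real.norm_eq_abs]
      exact mul_le_mul_of_nonneg_left this (abs_nonneg _)
    have h2 : ‖(S ^ i : M →L[ℂ] M)‖ ≤ ‖S‖ ^ i := norm_pow_le' S hi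
    calc ‖q.coeff i * (c ^ i - 1 - (i : ℂ) * (ε : ℂ))‖ * ‖(S ^ i : M →L[ℂ] M)‖
        ≤ (|p.coeff i| * (ε ^ 2 * (i * 2 ^ i))) * ‖S‖ ^ i := by
          apply mul_le_mul h1 h2 (norm_nonneg _) (by positivity)
      _ = (|p.coeff i| * (i * 2 ^ i) * ‖S‖ ^ i) * ε ^ 2 := by ring
  have hsum : ‖(Polynomial.aeval (c • S) q : M →L[ℂ] M) - Polynomial.aeval S q
      - ((ε : ℂ) • T)‖ ≤ C₀ * ε ^ 2 := by
    rw [hsplit, hC₀, Finset.sum_mul]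
    exact (norm_sum_le _ _).trans (Finset.sum_le_sum hterm)
  have hmain : ‖(Polynomial.aeval (c • S) q : M →L[ℂ] M) - Polynomial.aeval S q‖
      ≤ ε * L₁ + C₀ * ε ^ 2 := by
    have htri := norm_add_le ((ε : ℂ) • T)
      ((Polynomial.aeval (c • S) q : M →L[ℂ] M) - Polynomial.aeval S q - ((ε : ℂ) • T))
    rw [add_sub_cancel] at htri
    have hεT : ‖(ε : ℂ) • T‖ ≤ ε * L₁ := by
      rw [norm_smul ((ε : ℝ) : ℂ) T, Complex.norm_real, Real.norm_eq_abs, abs_of_pos hε0]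
      exact mul_le_mul_of_nonneg_left hTnorm hε0.le
    exact htri.trans (add_le_add hεT hsum)
  calc ‖(Polynomial.aeval (c • S) q : M →L[ℂ] M) - Polynomial.aeval S q‖
      ≤ ε * L₁ + C₀ * ε ^ 2 := hmain
    _ ≤ L₁ * ε + (C₀ + 1) * ε ^ 2 := by nlinarith [sq_nonneg ε]
end

section
/- Consider an L-layer network Φ(x) = σ_L(A_L σ_{L−1}(A_{L−1} ⋯ σ_1(A_1 x))) and a perturbed network Φ̃ with operators Ã_ℓ, where each σ_ℓ is Lipschitz with constant C_ℓ and σ_ℓ(0) = 0, ‖A_ℓ‖ ≤ B_ℓ, ‖Ã_ℓ‖ ≤ B_ℓ, and ‖A_ℓ − Ã_ℓ‖ ≤ Δ_ℓ for each ℓ. Then ‖Φ(x) − Φ̃(x)‖ ≤ Σ_{ℓ=1}^{L} Δ_ℓ (Π_{r=ℓ}^{L} C_r)(Π_{r=ℓ+1}^{L} B_r)(Π_{r=1}^{ℓ−1} C_r B_r) ‖x‖ for all x. -/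
open Finset

/-- The `ℓ`-layer prefix of a layered network `x_ℓ = σ_ℓ(A_ℓ x_{ℓ−1})` (0-indexed layers). -/
def net {M : Type*} [NormedAddCommGroup M] [NormedSpace ℝ M]
    (σ : ℕ → M → M) (A : ℕ → M →L[ℝ] M) : ℕ → M → M
  | 0, x => x
  | (ℓ + 1), x => σ ℓ (A ℓ (net σ A ℓ x))

lemma net_bound {M : Type*} [NormedAddCommGroup M] [NormedSpace ℝ M]
    (σ : ℕ → M → M) (A : ℕ → M →L[ℝ] M) (C B : ℕ → ℝ)
    (hC : ∀ ℓ, 0 ≤ C ℓ)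
    (hσ : ∀ ℓ, ∀ x y : M, ‖σ ℓ x - σ ℓ y‖ ≤ C ℓ * ‖x - y‖)
    (hσ0 : ∀ ℓ, σ ℓ 0 = 0)
    (hA : ∀ ℓ, ‖A ℓ‖ ≤ B ℓ) (L : ℕ) (x : M) :
    ‖net σ A L x‖ ≤ (∏ r ∈ Finset.range L, C r * B r) * ‖x‖ := by
  induction L with
  | zero => simp [net]
  | succ L ih =>
    have h1 : ‖net σ A (L+1) x‖ ≤ C L * ‖A L (net σ A L x)‖ := by
      simpa [net, hσ0 L] using hσ L (A L (net σ A L x)) 0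
    have h2 : ‖A L (net σ A L x)‖ ≤ B L * ‖net σ A L x‖ :=
      le_trans ((A L).le_opNorm _)
        (mul_le_mul_of_nonneg_right (hA L) (norm_nonneg _))
    calc ‖net σ A (L+1) x‖ ≤ C L * (B L * ‖net σ A L x‖) :=
          le_trans h1 (mul_le_mul_of_nonneg_left h2 (hC L))
      _ ≤ C L * (B L * ((∏ r ∈ Finset.range L, C r * B r) * ‖x‖)) := by
          have hB : 0 ≤ B L := le_trans (norm_nonneg _) (hA L)
          exact mul_le_mul_of_nonneg_left
            (mul_le_mul_of_nonneg_left ih hB) (hC L)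
      _ = (∏ r ∈ Finset.range (L+1), C r * B r) * ‖x‖ := by
          rw [Finset.prod_range_succ]; ring

/-- For an `L`-layer network `Φ(x) = σ_L(A_L σ_{L−1}(⋯ σ_1(A_1 x)))` and its
perturbation `Φ̃` with operators `Ã_ℓ`, where each `σ_ℓ` is `C_ℓ`-Lipschitz with
`σ_ℓ(0) = 0`, `‖A_ℓ‖ ≤ B_ℓ`, `‖Ã_ℓ‖ ≤ B_ℓ` and `‖A_ℓ − Ã_ℓ‖ ≤ Δ_ℓ`, one has
`‖Φ(x) − Φ̃(x)‖ ≤ Σ_ℓ Δ_ℓ (Π_{r=ℓ}^{L} C_r)(Π_{r=ℓ+1}^{L} B_r)(Π_{r=1}^{ℓ−1} C_r B_r) ‖x‖`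
(layers are 0-indexed here). -/
theorem stmt9 {M : Type*} [NormedAddCommGroup M] [NormedSpace ℝ M]
    (L : ℕ) (σ : ℕ → M → M) (A At : ℕ → M →L[ℝ] M) (C B Δ : ℕ → ℝ)
    (hC : ∀ ℓ, 0 ≤ C ℓ) (hΔpos : ∀ ℓ, 0 ≤ Δ ℓ)
    (hσ : ∀ ℓ, ∀ x y : M, ‖σ ℓ x - σ ℓ y‖ ≤ C ℓ * ‖x - y‖)
    (hσ0 : ∀ ℓ, σ ℓ 0 = 0)
    (hA : ∀ ℓ, ‖A ℓ‖ ≤ B ℓ) (hAt : ∀ ℓ, ‖At ℓ‖ ≤ B ℓ)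
    (hΔ : ∀ ℓ, ‖A ℓ - At ℓ‖ ≤ Δ ℓ) :
    ∀ x : M, ‖net σ A L x - net σ At L x‖ ≤
      (∑ ℓ ∈ Finset.range L, Δ ℓ * (∏ r ∈ Finset.Ico ℓ L, C r) *
        (∏ r ∈ Finset.Ico (ℓ + 1) L, B r) * (∏ r ∈ Finset.range ℓ, C r * B r)) * ‖x‖ := by
  intro x
  have hB : ∀ ℓ, 0 ≤ B ℓ := fun ℓ => le_trans (norm_nonneg _) (hA ℓ)
  induction L with
  | zero => simp [net]
  | succ L ih =>
    set u := net σ A L x with hu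
    set v := net σ At L x with hv
    have hlip : ‖net σ A (L+1) x - net σ At (L+1) x‖ ≤ C L * ‖A L u - At L v‖ := by
      simpa [net] using hσ L (A L u) (At L v)
    have hsplit : ‖A L u - At L v‖ ≤ B L * ‖u - v‖ + Δ L * ‖v‖ := by
      have heq : A L u - At L v = A L (u - v) + (A L - At L) v := by
        simp only [map_sub, ContinuousLinearMap.sub_apply]
        abel
      rw [heq]
      refine le_trans (norm_add_le _ _) (add_le_add ?_ ?_)
      · exact le_trans ((A L).le_opNorm _)
          (mul_le_mul_of_nonneg_right (hA L) (norm_nonneg _))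
      · exact le_trans ((A L - At L).le_opNorm _)
          (mul_le_mul_of_nonneg_right (hΔ L) (norm_nonneg _))
    have hvb : ‖v‖ ≤ (∏ r ∈ Finset.range L, C r * B r) * ‖x‖ :=
      net_bound σ At C B hC hσ hσ0 hAt L x
    have key : ‖net σ A (L+1) x - net σ At (L+1) x‖ ≤
        C L * (B L * ((∑ ℓ ∈ Finset.range L, Δ ℓ * (∏ r ∈ Finset.Ico ℓ L, C r) *
          (∏ r ∈ Finset.Ico (ℓ + 1) L, B r) * (∏ r ∈ Finset.range ℓ, C r * B r)) * ‖x‖)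
          + Δ L * ((∏ r ∈ Finset.range L, C r * B r) * ‖x‖)) := by
      refine le_trans hlip (mul_le_mul_of_nonneg_left ?_ (hC L))
      refine le_trans hsplit (add_le_add ?_ ?_)
      · exact mul_le_mul_of_nonneg_left ih (hB L)
      · exact mul_le_mul_of_nonneg_left hvb (hΔpos L)
    refine le_trans key (le_of_eq ?_)
    have hstep : ∀ ℓ ∈ Finset.range L,
        Δ ℓ * (∏ r ∈ Finset.Ico ℓ (L+1), C r) * (∏ r ∈ Finset.Ico (ℓ+1) (L+1), B r) *
          (∏ r ∈ Finset.range ℓ, C r * B r)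
        = C L * B L * (Δ ℓ * (∏ r ∈ Finset.Ico ℓ L, C r) * (∏ r ∈ Finset.Ico (ℓ+1) L, B r) *
          (∏ r ∈ Finset.range ℓ, C r * B r)) := by
      intro ℓ hℓ
      have hℓL : ℓ < L := Finset.mem_range.mp hℓ
      rw [Finset.prod_Ico_succ_top (le_of_lt hℓL), Finset.prod_Ico_succ_top hℓL]
      ring
    rw [Finset.sum_range_succ, Finset.sum_congr rfl hstep, ← Finset.mul_sum,
      Finset.Ico_add_one_right_eq_Icc, Finset.Icc_self, Finset.prod_singleton, Finset.Ico_self,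
      Finset.prod_empty]
    ring
end
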